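/- arXiv:1909.08801 — 5 statements merged into one kernel-verified Lean document; each statement's English description precedes it below -/
import Mathlib

section
/- Let P be a single-via path from s to t via v that is α-relative locally optimal little T = α·l(P). Let x_s' be the first vertex on P whose distance along P from s is at least α·l(P); define x_s = x_s' if the distance along P from s to x_s' is at most l(P)/2, and otherwise let x_s be the last vertex on P within distance l(P)/2 along P from s. Define x_t symmetrically from the destination side. Then there exists a vertex w on P such that the subpath of P from s to w is a shortest path with d(s,w) ≤ d_P(s, x_t), and the subpath of P from w to t is a shortest path with d(w,t) ≤ d_P(x_s, t), where d_P denotes distance along P. -/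
/-!
The prefix of `P` ending at `x_s` has interior shorter than `α·l(P)` (every vertex before `x_s'`
is), so it is a shortest path by local optimality; symmetrically the suffix starting at `x_t` is
one. Subpaths of shortest paths are shortest, so a via vertex lying before `x_s` may be replaced
by `x_s`, and one lying after `x_t` by `x_t`. Since `d_P(s, x_s) ≤ l(P)/2 ≤ d_P(s, x_t)`, the
resulting split vertex satisfies both bounds.
-/

open List

variable {V : Type*}

/-- Length (cost) of a path given as a list of vertices, with edge weights `c`. -/
def pLen (c : V → V → ℝ) : List V → ℝ
  | [] => 0
  | [_] => 0
  | a :: b :: rest => c a b + pLen c (b :: rest)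

/-- The pInterior of a path: the path with its two endpoints removed. -/
def pInterior (p : List V) : List V := (p.drop 1).dropLast

/-- A (nonempty) path is a shortest path if its length equals the shortest-path
distance `d` between its endpoints. -/
def IsShortestPath [Inhabited V] (c d : V → V → ℝ) (p : List V) : Prop :=
  p ≠ [] ∧ pLen c p = d p.headI p.getLastI

/-- A path is `T`-locally optimal if every `T`-significant subpath (a nonempty
infix whose pInterior has length `< T`) is a shortest path. -/
def TLocOpt [Inhabited V] (c d : V → V → ℝ) (T : ℝ) (p : List V) : Prop :=
  ∀ q : List V, q ≠ [] → q <:+: p → pLen c (pInterior q) < T → IsShortestPath c d q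

section PathLength

variable (c : V → V → ℝ)

@[simp] lemma pLen_singleton (a : V) : pLen c [a] = 0 := rfl

lemma pLen_cons_cons (a b : V) (l : List V) :
    pLen c (a :: b :: l) = c a b + pLen c (b :: l) := rfl

lemma pLen_append_cons (x : V) (q₂ : List V) :
    ∀ q₁ : List V, pLen c (q₁ ++ x :: q₂) = pLen c (q₁ ++ [x]) + pLen c (x :: q₂)
  | [] => by simp
  | [a] => by simp [pLen_cons_cons]
  | a :: b :: q₁ => by
    have ih := pLen_append_cons x q₂ (b :: q₁)
    simp only [cons_append, pLen_cons_cons] at ih ⊢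
    rw [ih]
    ring

lemma pLen_take_add_pLen_drop {l : List V} {k : ℕ} (hk : k < l.length) :
    pLen c (l.take (k + 1)) + pLen c (l.drop k) = pLen c l := by
  rw [take_add_one, getElem?_eq_getElem hk, Option.toList_some, drop_eq_getElem_cons hk,
    ← pLen_append_cons, ← drop_eq_getElem_cons hk, take_append_drop]

variable {c} (hc : ∀ a b, 0 ≤ c a b)
include hc

lemma pLen_nonneg : ∀ l : List V, 0 ≤ pLen c l
  | [] => le_rfl
  | [_] => le_rfl
  | a :: b :: l => add_nonneg (hc a b) (pLen_nonneg (b :: l))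

lemma pLen_tail_le : ∀ l : List V, pLen c l.tail ≤ pLen c l
  | [] => le_rfl
  | [_] => le_rfl
  | a :: b :: _ => le_add_of_nonneg_left (hc a b)

lemma pLen_take_le : ∀ (l : List V) (n : ℕ), pLen c (l.take n) ≤ pLen c l
  | [], _ => by simp
  | _ :: _, 0 => pLen_nonneg hc _
  | [_], _ + 1 => by simp
  | a :: b :: _, 1 => add_nonneg (hc a b) (pLen_nonneg hc _)
  | a :: b :: l, n + 2 => by
    simpa only [take_succ_cons, pLen_cons_cons, add_le_add_iff_left]
      using pLen_take_le (b :: l) (n + 1)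

lemma pLen_dropLast_le (l : List V) : pLen c l.dropLast ≤ pLen c l := by
  rw [dropLast_eq_take]
  exact pLen_take_le hc l _

lemma pLen_drop_le (l : List V) (n : ℕ) : pLen c (l.drop n) ≤ pLen c l := by
  induction n with
  | zero => rfl
  | succ n ih => exact (tail_drop ▸ pLen_tail_le hc _).trans ih

lemma monotone_pLen_take (l : List V) : Monotone fun n => pLen c (l.take n) := by
  intro m n hmn
  simpa only [take_take, min_eq_left hmn] using pLen_take_le hc (l.take n) m

lemma antitone_pLen_drop (l : List V) : Antitone fun n => pLen c (l.drop n) := by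
  intro m n hmn
  simpa only [drop_drop, Nat.add_sub_cancel' hmn] using pLen_drop_le hc (l.drop m) (n - m)

lemma pLen_pInterior_le_tail (l : List V) : pLen c (pInterior l) ≤ pLen c l.tail := by
  rw [pInterior, drop_one]
  exact pLen_dropLast_le hc _

lemma pLen_pInterior_le_dropLast (l : List V) : pLen c (pInterior l) ≤ pLen c l.dropLast := by
  rw [pInterior, drop_one, ← tail_dropLast]
  exact pLen_tail_le hc _

end PathLength

section ShortestPath

variable [Inhabited V] {c d : V → V → ℝ}
  (hlow : ∀ p : List V, p ≠ [] → d p.headI p.getLastI ≤ pLen c p)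
  (htri : ∀ a b e : V, d a e ≤ d a b + d b e)
include hlow htri

lemma isShortestPath_singleton (a : V) : IsShortestPath c d [a] := by
  have h₁ : d a a ≤ 0 := hlow [a] (cons_ne_nil a [])
  have h₂ := htri a a a
  exact ⟨cons_ne_nil a [], show 0 = d a a by linarith⟩

lemma IsShortestPath.append_cons {q₁ : List V} {x : V} {q₂ : List V}
    (h : IsShortestPath c d (q₁ ++ x :: q₂)) :
    IsShortestPath c d (q₁ ++ [x]) ∧ IsShortestPath c d (x :: q₂) := by
  have hhead : (q₁ ++ [x]).headI = (q₁ ++ x :: q₂).headI := by cases q₁ <;> rfl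
  have hlast₁ : (q₁ ++ [x]).getLastI = x := by simp [getLastI_eq_getLast?_getD]
  have hlast₂ : (x :: q₂).getLastI = (q₁ ++ x :: q₂).getLastI := by
    simp only [getLastI_eq_getLast?_getD, getLast?_append_cons]
  have h₁ := hlow (q₁ ++ [x]) (by simp)
  have h₂ := hlow (x :: q₂) (cons_ne_nil x q₂)
  have h₃ := htri (q₁ ++ x :: q₂).headI x (q₁ ++ x :: q₂).getLastI
  have hsum := pLen_append_cons c x q₂ q₁
  rw [hhead, hlast₁] at h₁
  rw [headI_cons, hlast₂] at h₂
  refine ⟨⟨by simp, ?_⟩, ⟨cons_ne_nil x q₂, ?_⟩⟩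
  · rw [hhead, hlast₁]; linarith [h.2]
  · rw [headI_cons, hlast₂]; linarith [h.2]

lemma IsShortestPath.take_drop {p : List V} (h : IsShortestPath c d p) {k : ℕ}
    (hk : k < p.length) :
    IsShortestPath c d (p.take (k + 1)) ∧ IsShortestPath c d (p.drop k) := by
  rw [← take_append_drop k p, drop_eq_getElem_cons hk] at h
  rw [take_add_one, getElem?_eq_getElem hk, Option.toList_some, drop_eq_getElem_cons hk]
  exact h.append_cons hlow htri

variable {T : ℝ} {P : List V}

lemma TLocOpt.isShortestPath_take (hc : ∀ a b, 0 ≤ c a b) (hP : TLocOpt c d T P) {i : ℕ}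
    (hi : i < P.length)
    (hT : ∀ j < i, pLen c (P.take (j + 1)) < T) :
    IsShortestPath c d (P.take (i + 1)) := by
  cases i with
  | zero =>
    obtain ⟨a, l, rfl⟩ := exists_cons_of_length_pos hi
    exact isShortestPath_singleton hlow htri a
  | succ n =>
    refine hP _ (by simpa using ne_nil_of_length_pos (by omega)) (take_prefix _ _).isInfix ?_
    have hdrop : (P.take (n + 2)).dropLast = P.take (n + 1) := by
      rw [dropLast_eq_take, length_take, min_eq_left (by omega), take_take]
      simp
    exact (pLen_pInterior_le_dropLast hc _).trans_lt (hdrop ▸ hT n (by omega))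

lemma TLocOpt.isShortestPath_drop (hc : ∀ a b, 0 ≤ c a b) (hP : TLocOpt c d T P) {i : ℕ}
    (hi : i < P.length)
    (hT : ∀ j, i < j → j < P.length → pLen c (P.drop j) < T) :
    IsShortestPath c d (P.drop i) := by
  rcases lt_or_ge (i + 1) P.length with h | h
  · refine hP _ (by simp; omega) (drop_suffix _ _).isInfix ?_
    exact (pLen_pInterior_le_tail hc _).trans_lt (tail_drop ▸ hT (i + 1) (by omega) h)
  · rw [drop_eq_getElem_cons hi, drop_eq_nil_of_le h]
    exact isShortestPath_singleton hlow htri _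

lemma exists_split_between (hc : ∀ a b, 0 ≤ c a b) {k₀ i j : ℕ}
    (hk₀ : k₀ < P.length)
    (hvia : IsShortestPath c d (P.take (k₀ + 1)) ∧ IsShortestPath c d (P.drop k₀))
    (hi : i < P.length) (hpre : IsShortestPath c d (P.take (i + 1)))
    (hsuf : IsShortestPath c d (P.drop j))
    (hij : pLen c (P.take (i + 1)) ≤ pLen c (P.take (j + 1))) :
    ∃ k < P.length, IsShortestPath c d (P.take (k + 1)) ∧ IsShortestPath c d (P.drop k) ∧
      pLen c (P.take (i + 1)) ≤ pLen c (P.take (k + 1)) ∧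
      pLen c (P.take (k + 1)) ≤ pLen c (P.take (j + 1)) := by
  rcases lt_or_ge k₀ i with hk₀i | hik₀
  · refine ⟨i, hi, hpre, ?_, le_rfl, hij⟩
    have := (hvia.2.take_drop hlow htri (k := i - k₀) (by simp; omega)).2
    rwa [drop_drop, Nat.add_sub_cancel' hk₀i.le] at this
  rcases lt_or_ge j k₀ with hjk₀ | hk₀j
  · refine ⟨j, by omega, ?_, hsuf, hij, le_rfl⟩
    have := (hvia.1.take_drop hlow htri (k := j) (by simp; omega)).1
    rwa [take_take, min_eq_left (by omega)] at this
  · exact ⟨k₀, hk₀, hvia.1, hvia.2, monotone_pLen_take hc P (by omega),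
      monotone_pLen_take hc P (by omega)⟩

end ShortestPath

lemma capped_index_spec_of_monotone {D : ℕ → ℝ} (hD : Monotone D) {b : ℝ} {n i' i : ℕ}
    (hi' : i' < n)
    (h : (D i' ≤ b ∧ i = i') ∨ (b < D i' ∧ i < n ∧ D i ≤ b)) :
    i < n ∧ i ≤ i' ∧ D i ≤ b := by
  rcases h with ⟨hb, rfl⟩ | ⟨hb, hin, hib⟩
  · exact ⟨hi', le_rfl, hb⟩
  · exact ⟨hin, le_of_not_gt fun h => (hb.trans_le (hD h.le)).not_ge hib, hib⟩

lemma capped_index_spec_of_antitone {E : ℕ → ℝ} (hE : Antitone E) {b : ℝ} {n i' i : ℕ}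
    (hi' : i' < n)
    (h : (E i' ≤ b ∧ i = i') ∨ (b < E i' ∧ i < n ∧ E i ≤ b)) :
    i < n ∧ i' ≤ i ∧ E i ≤ b := by
  rcases h with ⟨hb, rfl⟩ | ⟨hb, hin, hib⟩
  · exact ⟨hi', le_rfl, hb⟩
  · exact ⟨hin, le_of_not_gt fun h => (hb.trans_le (hE h.le)).not_ge hib, hib⟩

theorem stmt4_general [Inhabited V] (c d : V → V → ℝ) (hc : ∀ a b, 0 ≤ c a b)
    (hlow : ∀ p : List V, p ≠ [] → d p.headI p.getLastI ≤ pLen c p)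
    (htri : ∀ a b e : V, d a e ≤ d a b + d b e)
    (α : ℝ)
    (P : List V)
    -- along-path distance from `s` to the vertex at index `i`
    (D : ℕ → ℝ) (hD : ∀ i, D i = pLen c (P.take (i + 1)))
    -- along-path distance from the vertex at index `i` to `t`
    (E : ℕ → ℝ) (hE : ∀ i, E i = pLen c (P.drop i))
    -- `P` is a single-via path: some vertex splits it into two shortest paths
    (hvia : ∃ k < P.length,
      IsShortestPath c d (P.take (k + 1)) ∧ IsShortestPath c d (P.drop k))
    -- `P` is α-relative locally optimal
    (hRLO : TLocOpt c d (α * pLen c P) P)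
    -- `x_s'` (index `is'`): first vertex with along-path distance ≥ α·l(P)
    (is' : ℕ) (his'lt : is' < P.length)
    (his'2 : ∀ j < is', D j < α * pLen c P)
    -- `x_s` (index `ixs`)
    (ixs : ℕ)
    (hxs : (D is' ≤ pLen c P / 2 ∧ ixs = is') ∨
           (pLen c P / 2 < D is' ∧ ixs < P.length ∧ D ixs ≤ pLen c P / 2 ∧
             ∀ j < P.length, D j ≤ pLen c P / 2 → j ≤ ixs))
    -- `x_t'` (index `it'`): last vertex with distance to `t` ≥ α·l(P)
    (it' : ℕ) (hit'lt : it' < P.length)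
    (hit'2 : ∀ j, it' < j → j < P.length → E j < α * pLen c P)
    -- `x_t` (index `ixt`)
    (ixt : ℕ)
    (hxt : (E it' ≤ pLen c P / 2 ∧ ixt = it') ∨
           (pLen c P / 2 < E it' ∧ ixt < P.length ∧ E ixt ≤ pLen c P / 2 ∧
             ∀ j < P.length, E j ≤ pLen c P / 2 → ixt ≤ j)) :
    ∃ k < P.length,
      IsShortestPath c d (P.take (k + 1)) ∧ IsShortestPath c d (P.drop k) ∧
      D k ≤ D ixt ∧ E k ≤ E ixs := by
  obtain ⟨k₀, hk₀, hvia⟩ := hvia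
  have hDmono : Monotone D := fun i j hij => by
    simpa only [hD] using monotone_pLen_take hc P (Nat.succ_le_succ hij)
  have hEanti : Antitone E := fun i j hij => by
    simpa only [hE] using antitone_pLen_drop hc P hij
  have hDE : ∀ i < P.length, D i + E i = pLen c P := fun i hi => by
    rw [hD, hE]
    exact pLen_take_add_pLen_drop c hi
  obtain ⟨hxs_lt, hxs_le, hxs_half⟩ := capped_index_spec_of_monotone hDmono his'lt
    (hxs.imp_right fun h => ⟨h.1, h.2.1, h.2.2.1⟩)
  obtain ⟨hxt_lt, hxt_ge, hxt_half⟩ := capped_index_spec_of_antitone hEanti hit'lt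
    (hxt.imp_right fun h => ⟨h.1, h.2.1, h.2.2.1⟩)
  have hpre : IsShortestPath c d (P.take (ixs + 1)) :=
    hRLO.isShortestPath_take hlow htri hc hxs_lt fun j hj => hD j ▸ his'2 j (by omega)
  have hsuf : IsShortestPath c d (P.drop ixt) :=
    hRLO.isShortestPath_drop hlow htri hc hxt_lt fun j hj hjP => hE j ▸ hit'2 j (by omega) hjP
  have hxs_xt : D ixs ≤ D ixt := by linarith [hDE ixt hxt_lt]
  rw [hD, hD] at hxs_xt
  obtain ⟨k, hk, hpre_k, hsuf_k, hxs_k, hk_xt⟩ :=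
    exists_split_between hlow htri hc hk₀ hvia hxs_lt hpre hsuf hxs_xt
  refine ⟨k, hk, hpre_k, hsuf_k, by rwa [hD, hD], ?_⟩
  rw [← hD, ← hD] at hxs_k
  linarith [hDE k hk, hDE ixs hxs_lt]

/-- For an `α`-relative locally optimal single-via path `P`,
with `x_s` and `x_t` defined via first-passage of the along-path distance
past `α·l(P)` (truncated at the midpoint), there is a vertex `w` on `P`
(at index `k`) splitting `P` into two shortest paths with
`d_P(s,w) ≤ d_P(s,x_t)` and `d_P(w,t) ≤ d_P(x_s,t)`. -/
theorem stmt4 [Inhabited V] (c d : V → V → ℝ) (hc : ∀ a b, 0 ≤ c a b)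
    (hlow : ∀ p : List V, p ≠ [] → d p.headI p.getLastI ≤ pLen c p)
    (htri : ∀ a b e : V, d a e ≤ d a b + d b e)
    (α : ℝ) (hα0 : 0 < α) (hα1 : α ≤ 1)
    (P : List V) (hPne : P ≠ [])
    -- along-path distance from `s` to the vertex at index `i`
    (D : ℕ → ℝ) (hD : ∀ i, D i = pLen c (P.take (i + 1)))
    -- along-path distance from the vertex at index `i` to `t`
    (E : ℕ → ℝ) (hE : ∀ i, E i = pLen c (P.drop i))
    -- `P` is a single-via path: some vertex splits it into two shortest paths
    (hvia : ∃ k < P.length,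
      IsShortestPath c d (P.take (k + 1)) ∧ IsShortestPath c d (P.drop k))
    -- `P` is α-relative locally optimal
    (hRLO : TLocOpt c d (α * pLen c P) P)
    -- `x_s'` (index `is'`): first vertex with along-path distance ≥ α·l(P)
    (is' : ℕ) (his'lt : is' < P.length) (his'1 : α * pLen c P ≤ D is')
    (his'2 : ∀ j < is', D j < α * pLen c P)
    -- `x_s` (index `ixs`)
    (ixs : ℕ)
    (hxs : (D is' ≤ pLen c P / 2 ∧ ixs = is') ∨
           (pLen c P / 2 < D is' ∧ ixs < P.length ∧ D ixs ≤ pLen c P / 2 ∧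
             ∀ j < P.length, D j ≤ pLen c P / 2 → j ≤ ixs))
    -- `x_t'` (index `it'`): last vertex with distance to `t` ≥ α·l(P)
    (it' : ℕ) (hit'lt : it' < P.length) (hit'1 : α * pLen c P ≤ E it')
    (hit'2 : ∀ j, it' < j → j < P.length → E j < α * pLen c P)
    -- `x_t` (index `ixt`)
    (ixt : ℕ)
    (hxt : (E it' ≤ pLen c P / 2 ∧ ixt = it') ∨
           (pLen c P / 2 < E it' ∧ ixt < P.length ∧ E ixt ≤ pLen c P / 2 ∧
             ∀ j < P.length, E j ≤ pLen c P / 2 → ixt ≤ j)) :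
    ∃ k < P.length,
      IsShortestPath c d (P.take (k + 1)) ∧ IsShortestPath c d (P.drop k) ∧
      D k ≤ D ixt ∧ E k ≤ E ixs :=
  stmt4_general c d hc hlow htri α P D hD E hE hvia hRLO is' his'lt his'2 ixs hxs it' hit'lt hit'2
    ixt hxt
end

section
/- Let v be a vertex on an α-relative locally optimal s-t path P, and let L_s ≤ l(P) be any lower bound on the lengths of admissible paths starting at s. If reach(v) ≥ min{(α/2)·l(P), d(s,v), d(v,t)} and reach(v) < min{d(s,v), (α/2)·max(d(s,v), L_s)}, then reach(v) ≥ d(v,t), i.e., the reach bound is dominated by the destination-side distance. -/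
open List

variable {V : Type*}

/-- If `reach(v) ≥ min{(α/2)·l(P), d(s,v), d(v,t)}` holds and
`reach(v) < min{d(s,v), (α/2)·max(d(s,v), L_s)}` with `L_s ≤ l(P)`, then
`reach(v) ≥ d(v,t)`: the reach bound is dominated by the destination-side
distance. (Here `r = reach(v)`, `ds = d(s,v)`, `dt = d(v,t)`, `l = l(P)`.) -/
theorem stmt7 (r ds dt l Ls α : ℝ)
    (hα0 : 0 < α) (hα1 : α ≤ 1)
    (hds0 : 0 ≤ ds) (hdsl : ds ≤ l) (hLs : Ls ≤ l)
    (h1 : min (α / 2 * l) (min ds dt) ≤ r)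
    (h2 : r < min ds (α / 2 * max ds Ls)) :
    dt ≤ r := by
  have h2a : r < ds := lt_of_lt_of_le h2 (min_le_left _ _)
  have h2b : r < α / 2 * max ds Ls := lt_of_lt_of_le h2 (min_le_right _ _)
  have hml : max ds Ls ≤ l := max_le hdsl hLs
  have h2c : r < α / 2 * l :=
    lt_of_lt_of_le h2b (by nlinarith [mul_le_mul_of_nonneg_left hml (by linarith : (0:ℝ) ≤ α/2)])
  rcases le_or_gt dt r with h | h
  · exact h
  · exfalso
    rcases min_cases (α / 2 * l) (min ds dt) with ⟨he, _⟩ | ⟨he, _⟩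
    · rw [he] at h1; linarith
    · rw [he] at h1
      rcases min_cases ds dt with ⟨he2, _⟩ | ⟨he2, _⟩ <;> rw [he2] at h1 <;> linarith
end

section
/- For δ > 1, the T_δ-test on a path P performs at most 2·⌈1/(δ−1)⌉ shortest path queries. Formally: consider a sequence of positions 0 = a_1 < b_1, a_2, b_2, ... along a path segment of total length 2T, where each step satisfies b_i − a_i ≥ δT (capped at the segment end) and a_{i+1} ≥ b_i − T, and each a_i strictly increases by at least (δ−1)T per iteration until a_i reaches position T (the via vertex). Then the number of iterations n satisfies n ≤ ⌈1/(δ−1)⌉, so the total number of queries (one per iteration, counting both directions) is at most 2·⌈1/(δ−1)⌉. -/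
open List

variable {V : Type*}

/-- For `δ > 1`, the `T_δ`-test performs at most
`2·⌈1/(δ-1)⌉` shortest path queries: if `a 1 = 0`, each step advances the
left endpoint by at least `(δ-1)·T`, and the process has not yet reached the
via vertex (position `T`) before iteration `n`, then `n ≤ ⌈1/(δ-1)⌉ + 1`,
so the number of queries `2·(n-1)` is at most `2·⌈1/(δ-1)⌉`. -/
theorem stmt11 (T δ : ℝ) (hT : 0 < T) (hδ1 : 1 < δ) (hδ2 : δ ≤ 2)
    (a : ℕ → ℝ) (ha1 : a 1 = 0)
    (hstep : ∀ i : ℕ, a i + (δ - 1) * T ≤ a (i + 1))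
    (n : ℕ) (hstop : ∀ i : ℕ, 1 ≤ i → i < n → a i < T) :
    n ≤ ⌈1 / (δ - 1)⌉₊ + 1 ∧ 2 * (n - 1) ≤ 2 * ⌈1 / (δ - 1)⌉₊ := by
  have hδ : 0 < δ - 1 := by linarith
  have hlow : ∀ i : ℕ, 1 ≤ i → (i - 1 : ℝ) * ((δ - 1) * T) ≤ a i := by
    intro i hi
    induction i with
    | zero => omega
    | succ k ih =>
      rcases Nat.eq_or_lt_of_le hi with h | h
      · simp [← h, ha1]
      · have hk : 1 ≤ k := by omega
        have := ih hk
        have := hstep k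
        push_cast
        push_cast at this
        linarith [ih hk]
  have key : n ≤ ⌈1 / (δ - 1)⌉₊ + 1 := by
    by_contra hcon
    push_neg at hcon
    set m := ⌈1 / (δ - 1)⌉₊
    have h1 : a (m + 1) < T := hstop (m + 1) (by omega) (by omega)
    have h2 : ((m + 1 : ℕ) - 1 : ℝ) * ((δ - 1) * T) ≤ a (m + 1) := hlow (m + 1) (by omega)
    have hm : (1 / (δ - 1) : ℝ) ≤ m := Nat.le_ceil _
    have : (T : ℝ) ≤ (m : ℝ) * ((δ - 1) * T) := by
      have h := mul_le_mul_of_nonneg_right hm (le_of_lt (mul_pos hδ hT))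
      calc (T : ℝ) = 1 / (δ - 1) * ((δ - 1) * T) := by field_simp
        _ ≤ (m : ℝ) * ((δ - 1) * T) := h
    push_cast at h2
    linarith
  refine ⟨key, ?_⟩
  omega
end

section
/- Suppose edge e = (v,w) lies on the shortest s-w path and on the shortest v-t path, and edge e' = (u,v) lies on the shortest s-v path and on the shortest u-t path. Then the single-via paths via u, v, and w with respect to (s,t) are all identical: P_{sut} = P_{svt} = P_{swt}. -/
open List

variable {V : Type*}

lemma pLen_append_single (c : V → V → ℝ) [Inhabited V] :
    ∀ (p : List V), p ≠ [] → ∀ x, pLen c (p ++ [x]) = pLen c p + c p.getLastI x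
  | [], h, _ => absurd rfl h
  | [a], _, x => by simp [pLen, List.getLastI]
  | a :: b :: rest, _, x => by
    have ih := pLen_append_single c (b :: rest) (by simp) x
    have h1 : pLen c ((a :: b :: rest) ++ [x]) = c a b + pLen c ((b :: rest) ++ [x]) := rfl
    have h2 : pLen c (a :: b :: rest) = c a b + pLen c (b :: rest) := rfl
    have h3 : (a :: b :: rest).getLastI = (b :: rest).getLastI := by
      simp [List.getLastI_eq_getLast?]
    rw [h1, ih, h2, h3]; ring

lemma getLastI_append_single [Inhabited V] (p : List V) (x : V) :
    (p ++ [x]).getLastI = x := by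
  simp [List.getLastI_eq_getLast?]

lemma getLastI_cons [Inhabited V] (a : V) (p : List V) (h : p ≠ []) :
    (a :: p).getLastI = p.getLastI := by
  cases p with
  | nil => exact absurd rfl h
  | cons b r => simp [List.getLastI_eq_getLast?]

lemma headI_append [Inhabited V] (p : List V) (h : p ≠ []) (q : List V) :
    (p ++ q).headI = p.headI := by
  cases p with
  | nil => exact absurd rfl h
  | cons a r => rfl

/-- If `d s b = d s a + c a b`, then `sp s b = sp s a ++ [b]`. -/
lemma sp_snoc [Inhabited V] (c d : V → V → ℝ) (sp : V → V → List V)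
    (hsp : ∀ a b : V, IsShortestPath c d (sp a b) ∧
      (sp a b).headI = a ∧ (sp a b).getLastI = b)
    (huniq : ∀ (a b : V) (q : List V), IsShortestPath c d q → q.headI = a →
      q.getLastI = b → q = sp a b)
    (s a b : V) (h : d s b = d s a + c a b) :
    sp s b = sp s a ++ [b] := by
  obtain ⟨⟨hne, hlen⟩, hh, hl⟩ := hsp s a
  have key : (sp s a ++ [b] : List V) = sp s b := by
    refine huniq s b _ ⟨by simp, ?_⟩ (by rw [headI_append _ hne]; exact hh)
      (getLastI_append_single _ _)
    rw [pLen_append_single c _ hne, hlen, hh, hl, headI_append _ hne,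
      getLastI_append_single, hh, h]
  exact key.symm

/-- If `d a t = c a b + d b t`, then `sp a t = a :: sp b t`. -/
lemma sp_cons [Inhabited V] (c d : V → V → ℝ) (sp : V → V → List V)
    (hsp : ∀ a b : V, IsShortestPath c d (sp a b) ∧
      (sp a b).headI = a ∧ (sp a b).getLastI = b)
    (huniq : ∀ (a b : V) (q : List V), IsShortestPath c d q → q.headI = a →
      q.getLastI = b → q = sp a b)
    (t a b : V) (h : d a t = c a b + d b t) :
    sp a t = a :: sp b t := by
  obtain ⟨⟨hne, hlen⟩, hh, hl⟩ := hsp b t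
  obtain ⟨r, hbt⟩ : ∃ r, sp b t = b :: r := by
    cases hq : sp b t with
    | nil => exact absurd hq hne
    | cons x r =>
      rw [hq] at hh
      simp only [List.headI] at hh
      exact ⟨r, by rw [hh]⟩
  rw [hbt] at hlen hl
  have g1 : (a :: b :: r).getLastI = t := by
    rw [getLastI_cons _ _ (by simp), hl]
  have key : (a :: b :: r : List V) = sp a t := by
    refine huniq a t _ ⟨by simp, ?_⟩ rfl g1
    show c a b + pLen c (b :: r) = d (a :: b :: r).headI (a :: b :: r).getLastI
    rw [hlen, hl, g1]
    simp only [List.headI]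
    rw [h]
  rw [hbt]
  exact key.symm

/-- If edge `e = (v,w)` lies on the shortest `s`-`w` path and
on the shortest `v`-`t` path, and edge `e' = (u,v)` lies on the shortest
`s`-`v` path and on the shortest `u`-`t` path, then the single-via paths via
`u`, `v`, `w` with respect to `(s,t)` are all identical. -/
theorem stmt14 [Inhabited V] (c d : V → V → ℝ) (hc : ∀ a b, 0 ≤ c a b)
    (hlow : ∀ p : List V, p ≠ [] → d p.headI p.getLastI ≤ pLen c p)
    (htri : ∀ a b e : V, d a e ≤ d a b + d b e)
    (sp : V → V → List V)
    (hsp : ∀ a b : V, IsShortestPath c d (sp a b) ∧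
      (sp a b).headI = a ∧ (sp a b).getLastI = b)
    (huniq : ∀ (a b : V) (q : List V), IsShortestPath c d q → q.headI = a →
      q.getLastI = b → q = sp a b)
    (s t u v w : V)
    (hvw1 : d s w = d s v + c v w)
    (hvw2 : d v t = c v w + d w t)
    (huv1 : d s v = d s u + c u v)
    (huv2 : d u t = c u v + d v t) :
    sp s u ++ (sp u t).tail = sp s v ++ (sp v t).tail ∧
    sp s v ++ (sp v t).tail = sp s w ++ (sp w t).tail := by
  have hsv : sp s v = sp s u ++ [v] := sp_snoc c d sp hsp huniq s u v huv1
  have hsw : sp s w = sp s v ++ [w] := sp_snoc c d sp hsp huniq s v w hvw1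
  have hut : sp u t = u :: sp v t := sp_cons c d sp hsp huniq t u v huv2
  have hvt : sp v t = v :: sp w t := sp_cons c d sp hsp huniq t v w hvw2
  have hvhead : sp v t = v :: (sp v t).tail := by rw [hvt]; rfl
  have hwhead : sp w t = w :: (sp w t).tail := by
    obtain ⟨⟨hne, _⟩, hh, _⟩ := hsp w t
    cases hwt : sp w t with
    | nil => exact absurd hwt hne
    | cons x r =>
      simp only [hwt, List.headI] at hh
      rw [hh, List.tail_cons]
  constructor
  · rw [hsv, hut, List.tail_cons, List.append_assoc, List.singleton_append, ← hvhead]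
  · rw [hsw, hvt, List.tail_cons, List.append_assoc, List.singleton_append, ← hwhead]
end

section
/- In a bidirectional shortest path search with reach-based pruning: if both search trees have been grown to height h (all vertices u with d(s,u) ≤ h, respectively d(u,t) ≤ h, have been scanned), and v is an unscanned vertex lying on the shortest s-t path, then reach(v) > h. Hence no vertex with reach(v) ≤ h that is still unscanned can lie on the shortest s-t path. -/
open List

variable {V : Type*}

/-- In a bidirectional search with reach-based pruning: if both
trees have been grown to height `h` and `v` is an unscanned vertex on the
shortest `s`-`t` path, then `reach(v) > h`; hence no unscanned vertex with
`reach(v) ≤ h` lies on the shortest `s`-`t` path. -/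
theorem stmt19 [Inhabited V] (c d : V → V → ℝ)
    (reach : V → ℝ)
    -- every vertex on a shortest `s`-`t` path has
    -- `min(d(s,v), d(v,t)) ≤ reach(v)`
    (hreach : ∀ (s t v : V) (p : List V), IsShortestPath c d p →
      p.headI = s → p.getLastI = t → v ∈ p → min (d s v) (d v t) ≤ reach v)
    (s t v : V) (h : ℝ)
    (scannedF scannedB : V → Prop)
    (hF : ∀ u : V, d s u ≤ h → scannedF u)
    (hB : ∀ u : V, d u t ≤ h → scannedB u)
    (p : List V) (hp : IsShortestPath c d p)
    (hph : p.headI = s) (hpl : p.getLastI = t) (hvp : v ∈ p)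
    (hunscanned : ¬ scannedF v ∧ ¬ scannedB v) :
    h < reach v := by
  have h1 : h < d s v := lt_of_not_ge fun hle => hunscanned.1 (hF v hle)
  have h2 : h < d v t := lt_of_not_ge fun hle => hunscanned.2 (hB v hle)
  exact lt_of_lt_of_le (lt_min h1 h2) (hreach s t v p hp hph hpl hvp)
end
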